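/- Let f, ℓ ∈ C^∞(ℝ^d;ℝ), let ζ ∈ C_c^∞(ℝ;ℝ), and let τ, h > 0. Define G(t) = ∫_0^t ζ(s/τ) e^{−s²/(2h)} ds and u(x) = G(ℓ(x)) e^{−f(x)/h}. Then the pointwise identity (−h²Δ + |∇f|² − hΔf) u = e^{−(f + ℓ²/2)/h} [ ζ(ℓ/τ)(2h ∇f·∇ℓ + h ℓ |∇ℓ|² − h² Δℓ) − (h²/τ) ζ′(ℓ/τ) |∇ℓ|² ] holds on ℝ^d. -/

import Mathlib

/-!
Conjugation by `e^{-f/h}` turns the Witten Laplacian into a first-order perturbation of `-h²Δ`: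
`Δ_f (v e^{-f/h}) = e^{-f/h} (-h²Δv + 2h ∇f·∇v)`, by the product and chain rules for `Δ`.
Apply this to `v = G ∘ ℓ`, where `Δ(G ∘ ℓ) = G''(ℓ)|∇ℓ|² + G'(ℓ)Δℓ`, `∇(G ∘ ℓ) = G'(ℓ)∇ℓ`,
`G'(t) = ζ(t/τ) e^{-t²/2h}` by the fundamental theorem of calculus, and
`G''(t) = (ζ'(t/τ)/τ - (t/h) ζ(t/τ)) e^{-t²/2h}`; the Gaussian factor `e^{-ℓ²/2h}` then comes out.
-/

open MeasureTheory Metric Set intervalIntegral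

noncomputable section

/-- The Euclidean Laplacian `Δu = Σ_j ∂²u/∂x_j²` of a function on `ℝ^d`. -/
def lapl {d : ℕ} (u : EuclideanSpace ℝ (Fin d) → ℝ) (x : EuclideanSpace ℝ (Fin d)) : ℝ :=
  ∑ i : Fin d,
    fderiv ℝ (fun y => fderiv ℝ u y (EuclideanSpace.single i 1)) x (EuclideanSpace.single i 1)

/-- The semiclassical Witten Laplacian `Δ_f = -h²Δ + |∇f|² - hΔf` applied pointwise
to smooth functions. -/
def witten {d : ℕ} (f : EuclideanSpace ℝ (Fin d) → ℝ) (h : ℝ)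
    (u : EuclideanSpace ℝ (Fin d) → ℝ) (x : EuclideanSpace ℝ (Fin d)) : ℝ :=
  - h ^ 2 * lapl u x + ‖gradient f x‖ ^ 2 * u x - h * lapl f x * u x

open InnerProductSpace

section

variable {d : ℕ}

theorem sum_fderiv_single_mul_eq_inner_gradient {ι : Type*} [Fintype ι] [DecidableEq ι]
    (u v : EuclideanSpace ℝ ι → ℝ) (x : EuclideanSpace ℝ ι) :
    ∑ i, fderiv ℝ u x (EuclideanSpace.single i 1) * fderiv ℝ v x (EuclideanSpace.single i 1)
      = ⟪gradient u x, gradient v x⟫_ℝ := by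
  simp only [gradient, ← toDual_symm_apply (𝕜 := ℝ), PiLp.inner_apply]
  simp [mul_comm]

theorem ContDiff.differentiable_fderiv_apply {E : Type*} [NormedAddCommGroup E] [NormedSpace ℝ E]
    {u : E → ℝ} (hu : ContDiff ℝ 2 u) (v : E) :
    Differentiable ℝ (fun y => fderiv ℝ u y v) :=
  ((hu.fderiv_right (m := 1) (by norm_num)).differentiable one_ne_zero).clm_apply
    (differentiable_const v)

theorem lapl_mul {u v : EuclideanSpace ℝ (Fin d) → ℝ} (hu : ContDiff ℝ 2 u) (hv : ContDiff ℝ 2 v)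
    (x : EuclideanSpace ℝ (Fin d)) :
    lapl (fun y => u y * v y) x
      = u x * lapl v x + 2 * ⟪gradient u x, gradient v x⟫_ℝ + v x * lapl u x := by
  have hu1 := hu.differentiable two_ne_zero
  have hv1 := hv.differentiable two_ne_zero
  simp only [← sum_fderiv_single_mul_eq_inner_gradient, lapl, Finset.mul_sum,
    ← Finset.sum_add_distrib]
  refine Finset.sum_congr rfl fun i _ => ?_
  set e := EuclideanSpace.single i (1 : ℝ)
  have hpartial : (fun y => fderiv ℝ (fun y => u y * v y) y e)
      = fun y => u y * fderiv ℝ v y e + v y * fderiv ℝ u y e := by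
    funext y
    simp [fderiv_fun_mul (hu1 y) (hv1 y)]
  have hD : HasFDerivAt (fun y => u y * fderiv ℝ v y e + v y * fderiv ℝ u y e) _ x :=
    ((hu1 x).hasFDerivAt.mul (hv.differentiable_fderiv_apply e x).hasFDerivAt).add
      ((hv1 x).hasFDerivAt.mul (hu.differentiable_fderiv_apply e x).hasFDerivAt)
  rw [hpartial, hD.fderiv]
  simp only [add_apply, smul_apply, smul_eq_mul]
  ring

theorem fderiv_comp_real {E : Type*} [NormedAddCommGroup E] [NormedSpace ℝ E]
    {φ φ' : ℝ → ℝ} (hφ : ∀ t, HasDerivAt φ (φ' t) t) {ℓ : E → ℝ} (hℓ : Differentiable ℝ ℓ)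
    (x : E) : fderiv ℝ (fun y => φ (ℓ y)) x = φ' (ℓ x) • fderiv ℝ ℓ x :=
  ((hφ (ℓ x)).comp_hasFDerivAt x (hℓ x).hasFDerivAt).fderiv

theorem gradient_comp_real {ι : Type*} [Fintype ι]
    {φ φ' : ℝ → ℝ} (hφ : ∀ t, HasDerivAt φ (φ' t) t) {ℓ : EuclideanSpace ℝ ι → ℝ}
    (hℓ : Differentiable ℝ ℓ) (x : EuclideanSpace ℝ ι) :
    gradient (fun y => φ (ℓ y)) x = φ' (ℓ x) • gradient ℓ x := by
  rw [gradient, gradient, fderiv_comp_real hφ hℓ, map_smul]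

theorem lapl_comp {φ φ' φ'' : ℝ → ℝ} (hφ : ∀ t, HasDerivAt φ (φ' t) t)
    (hφ' : ∀ t, HasDerivAt φ' (φ'' t) t) {ℓ : EuclideanSpace ℝ (Fin d) → ℝ} (hℓ : ContDiff ℝ 2 ℓ)
    (x : EuclideanSpace ℝ (Fin d)) :
    lapl (fun y => φ (ℓ y)) x = φ'' (ℓ x) * ‖gradient ℓ x‖ ^ 2 + φ' (ℓ x) * lapl ℓ x := by
  have hℓ1 := hℓ.differentiable two_ne_zero
  simp only [← real_inner_self_eq_norm_sq, ← sum_fderiv_single_mul_eq_inner_gradient, lapl,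
    Finset.mul_sum, ← Finset.sum_add_distrib]
  refine Finset.sum_congr rfl fun i _ => ?_
  set e := EuclideanSpace.single i (1 : ℝ)
  have hpartial : (fun y => fderiv ℝ (fun y => φ (ℓ y)) y e)
      = fun y => φ' (ℓ y) * fderiv ℝ ℓ y e := by
    funext y
    simp [fderiv_comp_real hφ hℓ1]
  have hD : HasFDerivAt (fun y => φ' (ℓ y) * fderiv ℝ ℓ y e) _ x :=
    ((hφ' (ℓ x)).comp_hasFDerivAt x (hℓ1 x).hasFDerivAt).mul
      (hℓ.differentiable_fderiv_apply e x).hasFDerivAt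
  rw [hpartial, hD.fderiv]
  simp only [add_apply, smul_apply, smul_eq_mul, Function.comp_apply]
  ring

theorem witten_mul_exp_neg_div {f v : EuclideanSpace ℝ (Fin d) → ℝ}
    (hf : ContDiff ℝ 2 f) (hv : ContDiff ℝ 2 v) {h : ℝ} (hh : h ≠ 0)
    (x : EuclideanSpace ℝ (Fin d)) :
    witten f h (fun y => v y * Real.exp (- f y / h)) x
      = Real.exp (- f x / h) * (- h ^ 2 * lapl v x + 2 * h * ⟪gradient f x, gradient v x⟫_ℝ) := by
  have hE : ∀ t, HasDerivAt (fun t => Real.exp (- t / h)) (Real.exp (- t / h) * (-1 / h)) t :=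
    fun t => ((hasDerivAt_id t).neg.div_const h).exp
  have hE' : ∀ t, HasDerivAt (fun t => Real.exp (- t / h) * (-1 / h))
      (Real.exp (- t / h) * (-1 / h) * (-1 / h)) t :=
    fun t => (hE t).mul_const _
  have hEf : ContDiff ℝ 2 (fun y => Real.exp (- f y / h)) := by fun_prop
  rw [witten, lapl_mul hv hEf, lapl_comp hE hE' hf,
    gradient_comp_real hE (hf.differentiable two_ne_zero), inner_smul_right, real_inner_comm]
  field_simp
  ring

end

theorem hasDerivAt_comp_div_mul_exp_neg_sq {ζ : ℝ → ℝ} (hζ : Differentiable ℝ ζ) (τ h t : ℝ) :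
    HasDerivAt (fun s => ζ (s / τ) * Real.exp (- s ^ 2 / (2 * h)))
      ((deriv ζ (t / τ) / τ - t / h * ζ (t / τ)) * Real.exp (- t ^ 2 / (2 * h))) t := by
  have hζτ : HasDerivAt (fun s => ζ (s / τ)) (deriv ζ (t / τ) * (1 / τ)) t :=
    (hζ (t / τ)).hasDerivAt.comp t ((hasDerivAt_id t).div_const τ)
  have hgauss : HasDerivAt (fun s => Real.exp (- s ^ 2 / (2 * h)))
      (Real.exp (- t ^ 2 / (2 * h)) * (-(2 * t ^ 1 * 1) / (2 * h))) t :=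
    (((hasDerivAt_id t).pow 2).neg.div_const (2 * h)).exp
  exact (hζτ.mul hgauss).congr_deriv (by ring)

theorem contDiff_two_of_hasDerivAt {G g : ℝ → ℝ} (hG : ∀ t, HasDerivAt G (g t) t)
    (hg : ContDiff ℝ 1 g) : ContDiff ℝ 2 G := by
  rw [show (2 : WithTop ℕ∞) = 1 + 1 by norm_num, contDiff_succ_iff_deriv]
  refine ⟨fun t => (hG t).differentiableAt, by simp, ?_⟩
  rwa [show deriv G = g from funext fun t => (hG t).deriv]

theorem witten_apply_gaussian_quasimode_general
    {d : ℕ} (f ℓ : EuclideanSpace ℝ (Fin d) → ℝ) (ζ : ℝ → ℝ) (τ h : ℝ)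
    (hf : ContDiff ℝ (⊤ : ℕ∞) f) (hℓ : ContDiff ℝ (⊤ : ℕ∞) ℓ)
    (hζ : ContDiff ℝ (⊤ : ℕ∞) ζ)
    (hh : 0 < h)
    (G : ℝ → ℝ) (hG : ∀ t, G t = ∫ s in (0 : ℝ)..t, ζ (s / τ) * Real.exp (- s ^ 2 / (2 * h)))
    (u : EuclideanSpace ℝ (Fin d) → ℝ)
    (hu : ∀ x, u x = G (ℓ x) * Real.exp (- f x / h)) :
    ∀ x, witten f h u x =
      Real.exp (- (f x + (ℓ x) ^ 2 / 2) / h) *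
        ( ζ (ℓ x / τ) *
            (2 * h * (inner ℝ (gradient f x) (gradient ℓ x) : ℝ)
              + h * ℓ x * ‖gradient ℓ x‖ ^ 2 - h ^ 2 * lapl ℓ x)
          - (h ^ 2 / τ) * deriv ζ (ℓ x / τ) * ‖gradient ℓ x‖ ^ 2 ) := by
  intro x
  have hf2 : ContDiff ℝ 2 f := hf.of_le (by norm_cast)
  have hℓ2 : ContDiff ℝ 2 ℓ := hℓ.of_le (by norm_cast)
  have hζ1 : ContDiff ℝ 1 ζ := hζ.of_le (by norm_cast)
  have hG' : ∀ t, HasDerivAt G (ζ (t / τ) * Real.exp (- t ^ 2 / (2 * h))) t := by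
    intro t
    rw [show G = _ from funext hG]
    exact (Continuous.integral_hasStrictDerivAt (by fun_prop) 0 t).hasDerivAt
  have hg' := hasDerivAt_comp_div_mul_exp_neg_sq (hζ1.differentiable one_ne_zero) τ h
  have hGℓ : ContDiff ℝ 2 (fun y => G (ℓ y)) :=
    (contDiff_two_of_hasDerivAt hG' (by fun_prop)).comp hℓ2
  rw [show u = fun y => G (ℓ y) * Real.exp (- f y / h) from funext hu,
    witten_mul_exp_neg_div hf2 hGℓ hh.ne', lapl_comp hG' hg' hℓ2,
    gradient_comp_real hG' (hℓ2.differentiable two_ne_zero), inner_smul_right,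
    show - (f x + ℓ x ^ 2 / 2) / h = - f x / h + - ℓ x ^ 2 / (2 * h) by ring, Real.exp_add]
  field_simp
  ring

/-- **Action of the Witten Laplacian on Gaussian-type quasimodes.**
Let `f, ℓ ∈ C^∞(ℝ^d; ℝ)`, `ζ ∈ C_c^∞(ℝ; ℝ)` and `τ, h > 0`. Define
`G(t) = ∫_0^t ζ(s/τ) e^{-s²/(2h)} ds` and `u(x) = G(ℓ(x)) e^{-f(x)/h}`. Then pointwise
`Δ_f u = e^{-(f + ℓ²/2)/h} [ ζ(ℓ/τ)(2h ∇f·∇ℓ + h ℓ |∇ℓ|² - h² Δℓ) - (h²/τ) ζ'(ℓ/τ) |∇ℓ|² ]`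
on `ℝ^d`. -/
theorem witten_apply_gaussian_quasimode
    {d : ℕ} (f ℓ : EuclideanSpace ℝ (Fin d) → ℝ) (ζ : ℝ → ℝ) (τ h : ℝ)
    (hf : ContDiff ℝ (⊤ : ℕ∞) f) (hℓ : ContDiff ℝ (⊤ : ℕ∞) ℓ)
    (hζ : ContDiff ℝ (⊤ : ℕ∞) ζ) (hζc : HasCompactSupport ζ)
    (hτ : 0 < τ) (hh : 0 < h)
    (G : ℝ → ℝ) (hG : ∀ t, G t = ∫ s in (0 : ℝ)..t, ζ (s / τ) * Real.exp (- s ^ 2 / (2 * h)))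
    (u : EuclideanSpace ℝ (Fin d) → ℝ)
    (hu : ∀ x, u x = G (ℓ x) * Real.exp (- f x / h)) :
    ∀ x, witten f h u x =
      Real.exp (- (f x + (ℓ x) ^ 2 / 2) / h) *
        ( ζ (ℓ x / τ) *
            (2 * h * (inner ℝ (gradient f x) (gradient ℓ x) : ℝ)
              + h * ℓ x * ‖gradient ℓ x‖ ^ 2 - h ^ 2 * lapl ℓ x)
          - (h ^ 2 / τ) * deriv ζ (ℓ x / τ) * ‖gradient ℓ x‖ ^ 2 ) :=
  witten_apply_gaussian_quasimode_general f ℓ ζ τ h hf hℓ hζ hh G hG u hu
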